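/- Let A be an s-normed operator ideal. Define the holomorphic-Lipschitz dual ideal components A^{HL₀-dual}(B_X,Y) = {f ∈ HL₀(B_X,Y) : f^t ∈ A(Y*, HL₀(B_X))} with norm ‖f‖ = ‖f^t‖_A. Then A^{HL₀-dual}(B_X,Y) coincides isometrically with the composition ideal A^{dual} ∘ HL₀(B_X,Y), i.e., f^t ∈ A(Y*, HL₀(B_X)) if and only if f = T ∘ h for some Banach space Z, T ∈ L(Z,Y) with T* ∈ A(Y*, Z*), and h ∈ HL₀(B_X, Z); and ‖f^t‖_A = inf ‖T*‖_A L(h) over all such factorizations. -/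

import Mathlib

open Metric Set Filter Topology

noncomputable section

universe u

def LipImage {X Y : Type*} [NormedAddCommGroup X] [NormedSpace ℂ X]
    [NormedAddCommGroup Y] [NormedSpace ℂ Y] (f : X → Y) : Set Y :=
  {v | ∃ x ∈ ball (0 : X) 1, ∃ y ∈ ball (0 : X) 1, x ≠ y ∧ v = ‖x - y‖⁻¹ • (f x - f y)}

def MemHL {X Y : Type*} [NormedAddCommGroup X] [NormedSpace ℂ X]
    [NormedAddCommGroup Y] [NormedSpace ℂ Y] (f : X → Y) : Prop :=
  f 0 = 0 ∧ DifferentiableOn ℂ f (ball (0 : X) 1) ∧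
    ∃ C : ℝ, ∀ x ∈ ball (0 : X) 1, ∀ y ∈ ball (0 : X) 1, ‖f x - f y‖ ≤ C * ‖x - y‖

def LipNorm {X Y : Type*} [NormedAddCommGroup X] [NormedSpace ℂ X]
    [NormedAddCommGroup Y] [NormedSpace ℂ Y] (f : X → Y) : ℝ :=
  sSup ((fun p : X × X => ‖f p.1 - f p.2‖ / ‖p.1 - p.2‖) ''
    {p : X × X | p.1 ∈ ball (0 : X) 1 ∧ p.2 ∈ ball (0 : X) 1 ∧ p.1 ≠ p.2})

/-- A bundled complex Banach space. -/
structure BanachSp : Type (u + 1) where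
  carrier : Type u
  [nacg : NormedAddCommGroup carrier]
  [nsc : NormedSpace ℂ carrier]
  [cs : CompleteSpace carrier]

attribute [instance] BanachSp.nacg BanachSp.nsc BanachSp.cs

/-- Relative 𝒜-compactness (Carl–Stephani): K ⊆ T(M) for some Banach space W,
T ∈ 𝒜(W, Z) and relatively compact M ⊆ W. -/
def RelACompact (A : ∀ W Z : BanachSp.{u}, Set (W.carrier →L[ℂ] Z.carrier))
    (Z : BanachSp.{u}) (K : Set Z.carrier) : Prop :=
  ∃ (W : BanachSp.{u}) (T : W.carrier →L[ℂ] Z.carrier) (M : Set W.carrier),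
    T ∈ A W Z ∧ IsCompact (closure M) ∧ K ⊆ T '' M

/-- The measure m_𝒜 of 𝒜-compactness of a set. -/
def mA (A : ∀ W Z : BanachSp.{u}, Set (W.carrier →L[ℂ] Z.carrier))
    (nA : ∀ W Z : BanachSp.{u}, (W.carrier →L[ℂ] Z.carrier) → ℝ)
    (Z : BanachSp.{u}) (K : Set Z.carrier) : ℝ :=
  sInf {r : ℝ | ∃ (W : BanachSp.{u}) (T : W.carrier →L[ℂ] Z.carrier) (M : Set W.carrier),
    T ∈ A W Z ∧ IsCompact (closure M) ∧ K ⊆ T '' M ∧ r = nA W Z T}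

/-- The dual of a bundled complex Banach space. -/
def dualSp (W : BanachSp.{u}) : BanachSp.{u} := ⟨W.carrier →L[ℂ] ℂ⟩

/-! The transpose of `f = T ∘ h` is `h^t ∘ T*`, so a factorization through an operator
whose adjoint lies in `𝒜` puts `f^t` in `𝒜` with `‖f^t‖_𝒜 ≤ ‖T*‖_𝒜 · L(h)`. Conversely, at each
point `δX x` the functional `y* ↦ f^t(y*)(δX x) = y*(f x)` is evaluation at a point of `Y`; the
points of `G` with this property form a closed subspace (`Y` is closed in `Y**`), hence all of
`G`. This yields the linearization `T_f : G → Y` with `T_f* = f^t` and `f = T_f ∘ δX`, and since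
`L(δX) ≤ 1` this factorization attains the infimum. -/

section LipschitzNorm

variable {X Y Z : Type*} [NormedAddCommGroup X] [NormedSpace ℂ X]
  [NormedAddCommGroup Y] [NormedSpace ℂ Y] [NormedAddCommGroup Z] [NormedSpace ℂ Z]

lemma lipNorm_nonneg (f : X → Y) : 0 ≤ LipNorm f :=
  Real.sSup_nonneg <| by rintro r ⟨p, -, rfl⟩; positivity

lemma lipNorm_le {f : X → Y} {C : ℝ} (hC : 0 ≤ C)
    (h : ∀ x ∈ ball (0 : X) 1, ∀ y ∈ ball (0 : X) 1, ‖f x - f y‖ ≤ C * ‖x - y‖) :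
    LipNorm f ≤ C := by
  refine Real.sSup_le ?_ hC
  rintro r ⟨⟨x, y⟩, ⟨hx, hy, hxy⟩, rfl⟩
  rw [div_le_iff₀ (norm_pos_iff.2 (sub_ne_zero.2 hxy))]
  exact h x hx y hy

lemma MemHL.norm_sub_le_lipNorm_mul {f : X → Y} (hf : MemHL f) {x y : X}
    (hx : x ∈ ball (0 : X) 1) (hy : y ∈ ball (0 : X) 1) :
    ‖f x - f y‖ ≤ LipNorm f * ‖x - y‖ := by
  rcases eq_or_ne x y with rfl | hxy
  · simp
  obtain ⟨C, hC⟩ := hf.2.2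
  have hbdd : BddAbove ((fun p : X × X => ‖f p.1 - f p.2‖ / ‖p.1 - p.2‖) ''
      {p : X × X | p.1 ∈ ball (0 : X) 1 ∧ p.2 ∈ ball (0 : X) 1 ∧ p.1 ≠ p.2}) := by
    refine ⟨C, ?_⟩
    rintro r ⟨⟨a, b⟩, ⟨ha, hb, hab⟩, rfl⟩
    rw [div_le_iff₀ (norm_pos_iff.2 (sub_ne_zero.2 hab))]
    exact hC a ha b hb
  rw [← div_le_iff₀ (norm_pos_iff.2 (sub_ne_zero.2 hxy))]
  exact le_csSup hbdd ⟨(x, y), ⟨hx, hy, hxy⟩, rfl⟩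

lemma MemHL.clm_comp {h : X → Y} (hh : MemHL h) (ψ : Y →L[ℂ] Z) :
    MemHL (fun x => ψ (h x)) := by
  obtain ⟨h0, hdiff, C, hC⟩ := hh
  refine ⟨by simp [h0], ψ.differentiable.comp_differentiableOn hdiff, ‖ψ‖ * C,
    fun x hx y hy => ?_⟩
  calc ‖ψ (h x) - ψ (h y)‖ ≤ ‖ψ‖ * ‖h x - h y‖ := by rw [← map_sub]; exact ψ.le_opNorm _
    _ ≤ ‖ψ‖ * (C * ‖x - y‖) := by gcongr; exact hC x hx y hy
    _ = ‖ψ‖ * C * ‖x - y‖ := by ring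

lemma MemHL.lipNorm_clm_comp_le {h : X → Y} (hh : MemHL h) (ψ : Y →L[ℂ] Z) :
    LipNorm (fun x => ψ (h x)) ≤ ‖ψ‖ * LipNorm h := by
  refine lipNorm_le (by positivity [lipNorm_nonneg h]) fun x hx y hy => ?_
  calc ‖ψ (h x) - ψ (h y)‖ ≤ ‖ψ‖ * ‖h x - h y‖ := by rw [← map_sub]; exact ψ.le_opNorm _
    _ ≤ ‖ψ‖ * (LipNorm h * ‖x - y‖) := by gcongr; exact hh.norm_sub_le_lipNorm_mul hx hy
    _ = ‖ψ‖ * LipNorm h * ‖x - y‖ := by ring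

end LipschitzNorm

theorem exists_clm_dual_apply_eq_of_dense_span {𝕜 G Y : Type*} [RCLike 𝕜]
    [NormedAddCommGroup G] [NormedSpace 𝕜 G] [NormedAddCommGroup Y] [NormedSpace 𝕜 Y]
    [CompleteSpace Y] (u : StrongDual 𝕜 Y →L[𝕜] StrongDual 𝕜 G) {s : Set G}
    (hs : Dense (Submodule.span 𝕜 s : Set G))
    (hu : ∀ g ∈ s, ∃ y : Y, ∀ φ : StrongDual 𝕜 Y, u φ g = φ y) :
    ∃ T : G →L[𝕜] Y, ∀ φ g, u φ g = φ (T g) := by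
  set J := NormedSpace.inclusionInDoubleDualLi 𝕜 (E := Y)
  let R : Submodule 𝕜 G := (LinearMap.range J.toLinearMap).comap u.flip.toLinearMap
  have hR_closed : IsClosed (R : Set G) :=
    J.isometry.isUniformInducing.isComplete_range.isClosed.preimage u.flip.continuous
  have hsR : s ⊆ R := fun g hg => by
    obtain ⟨y, hy⟩ := hu g hg
    exact ⟨y, ContinuousLinearMap.ext fun φ => (hy φ).symm⟩
  have hR : ∀ g, u.flip g ∈ LinearMap.range J.toLinearMap :=
    fun g => hR_closed.closure_subset (hs.mono (Submodule.span_le.2 hsR) g)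
  choose T hT using hR
  have hJT : ∀ g, J (T g) = u.flip g := hT
  refine ⟨LinearMap.mkContinuous
    { toFun := T
      map_add' := fun g g' => J.injective (by simp [hJT])
      map_smul' := fun c g => J.injective (by simp [hJT]) } ‖u.flip‖ fun g => ?_,
    fun φ g => (DFunLike.congr_fun (hJT g) φ).symm⟩
  calc ‖T g‖ = ‖u.flip g‖ := by rw [← hJT, J.norm_map]
    _ ≤ ‖u.flip‖ * ‖g‖ := u.flip.le_opNorm g

theorem ContinuousLinearMap.ext_on_image {𝕜 G F ι : Type*} [RCLike 𝕜]
    [NormedAddCommGroup G] [NormedSpace 𝕜 G] [NormedAddCommGroup F] [NormedSpace 𝕜 F]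
    {e : ι → G} {s : Set ι} (hs : Dense (Submodule.span 𝕜 (e '' s) : Set G))
    {g₁ g₂ : G →L[𝕜] F} (h : ∀ i ∈ s, g₁ (e i) = g₂ (e i)) : g₁ = g₂ :=
  ContinuousLinearMap.ext_on hs <| by rintro _ ⟨i, hi, rfl⟩; exact h i hi

section Linearization

variable {X G Y Z : Type*} [NormedAddCommGroup X] [NormedSpace ℂ X]
  [NormedAddCommGroup G] [NormedSpace ℂ G] [NormedAddCommGroup Y] [NormedSpace ℂ Y]
  [NormedAddCommGroup Z] [NormedSpace ℂ Z] {δX : X → G} {linC : (X → ℂ) → StrongDual ℂ G}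

lemma lipNorm_le_one
    (hdense : Dense (Submodule.span ℂ (δX '' ball (0 : X) 1) : Set G))
    (hlinC : ∀ g : X → ℂ, MemHL g → ∀ x ∈ ball (0 : X) 1, linC g (δX x) = g x)
    (hlinCnorm : ∀ g : X → ℂ, MemHL g → ‖linC g‖ = LipNorm g) (hδ : MemHL δX) :
    LipNorm δX ≤ 1 := by
  refine lipNorm_le zero_le_one fun x hx y hy => ?_
  refine NormedSpace.norm_le_dual_bound ℂ _ (by positivity) fun φ => ?_
  have hφδ : MemHL (fun z => φ (δX z)) := hδ.clm_comp φ
  have hnorm : LipNorm (fun z => φ (δX z)) = ‖φ‖ := by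
    rw [← hlinCnorm _ hφδ, ContinuousLinearMap.ext_on_image hdense fun z hz => hlinC _ hφδ z hz]
  calc ‖φ (δX x - δX y)‖ = ‖φ (δX x) - φ (δX y)‖ := by rw [map_sub]
    _ ≤ LipNorm (fun z => φ (δX z)) * ‖x - y‖ := hφδ.norm_sub_le_lipNorm_mul hx hy
    _ = 1 * ‖x - y‖ * ‖φ‖ := by rw [hnorm]; ring

lemma exists_transpose
    (hdense : Dense (Submodule.span ℂ (δX '' ball (0 : X) 1) : Set G))
    (hlinC : ∀ g : X → ℂ, MemHL g → ∀ x ∈ ball (0 : X) 1, linC g (δX x) = g x)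
    (hlinCnorm : ∀ g : X → ℂ, MemHL g → ‖linC g‖ = LipNorm g) {h : X → Z} (hh : MemHL h) :
    ∃ v : StrongDual ℂ Z →L[ℂ] StrongDual ℂ G,
      (∀ ψ, v ψ = linC (fun x => ψ (h x))) ∧ ‖v‖ ≤ LipNorm h := by
  have hv : ∀ ψ : StrongDual ℂ Z, ∀ x ∈ ball (0 : X) 1,
      linC (fun x => ψ (h x)) (δX x) = ψ (h x) := fun ψ => hlinC _ (hh.clm_comp ψ)
  have hbound : ∀ ψ : StrongDual ℂ Z, ‖linC (fun x => ψ (h x))‖ ≤ LipNorm h * ‖ψ‖ := by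
    intro ψ
    rw [hlinCnorm _ (hh.clm_comp ψ), mul_comm]
    exact hh.lipNorm_clm_comp_le ψ
  let v : StrongDual ℂ Z →ₗ[ℂ] StrongDual ℂ G :=
    { toFun := fun ψ => linC (fun x => ψ (h x))
      map_add' := fun ψ₁ ψ₂ => ContinuousLinearMap.ext_on_image hdense fun x hx => by
        rw [hv _ x hx]; simp [hv _ x hx]
      map_smul' := fun c ψ => ContinuousLinearMap.ext_on_image hdense fun x hx => by
        rw [hv _ x hx]; simp [hv _ x hx] }
  exact ⟨v.mkContinuous _ hbound, fun _ => rfl,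
    v.mkContinuous_norm_le (lipNorm_nonneg h) hbound⟩

lemma eq_transpose_comp_adjoint
    (hdense : Dense (Submodule.span ℂ (δX '' ball (0 : X) 1) : Set G))
    (hlinC : ∀ g : X → ℂ, MemHL g → ∀ x ∈ ball (0 : X) 1, linC g (δX x) = g x)
    {f : X → Y} (hf : MemHL f) {h : X → Z} (hh : MemHL h) {T : Z →L[ℂ] Y}
    (hfT : ∀ x ∈ ball (0 : X) 1, f x = T (h x))
    {T' : StrongDual ℂ Y →L[ℂ] StrongDual ℂ Z} (hT' : ∀ φ z, T' φ z = φ (T z))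
    {u : StrongDual ℂ Y →L[ℂ] StrongDual ℂ G} (hu : ∀ φ, u φ = linC (fun x => φ (f x)))
    {v : StrongDual ℂ Z →L[ℂ] StrongDual ℂ G} (hv : ∀ ψ, v ψ = linC (fun x => ψ (h x))) :
    u = v.comp T' := by
  ext φ : 1
  refine ContinuousLinearMap.ext_on_image hdense fun x hx => ?_
  rw [ContinuousLinearMap.comp_apply, hu, hv, hlinC _ (hf.clm_comp φ) x hx,
    hlinC _ (hh.clm_comp (T' φ)) x hx, hT', hfT x hx]

lemma exists_eq_transpose_comp_adjoint
    (hdense : Dense (Submodule.span ℂ (δX '' ball (0 : X) 1) : Set G))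
    (hlinC : ∀ g : X → ℂ, MemHL g → ∀ x ∈ ball (0 : X) 1, linC g (δX x) = g x)
    (hlinCnorm : ∀ g : X → ℂ, MemHL g → ‖linC g‖ = LipNorm g)
    {f : X → Y} (hf : MemHL f) {h : X → Z} (hh : MemHL h) {T : Z →L[ℂ] Y}
    (hfT : ∀ x ∈ ball (0 : X) 1, f x = T (h x))
    {T' : StrongDual ℂ Y →L[ℂ] StrongDual ℂ Z} (hT' : ∀ φ z, T' φ z = φ (T z))
    {u : StrongDual ℂ Y →L[ℂ] StrongDual ℂ G} (hu : ∀ φ, u φ = linC (fun x => φ (f x))) :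
    ∃ v : StrongDual ℂ Z →L[ℂ] StrongDual ℂ G, ‖v‖ ≤ LipNorm h ∧ u = v.comp T' := by
  obtain ⟨v, hv, hv_norm⟩ := exists_transpose hdense hlinC hlinCnorm hh
  exact ⟨v, hv_norm, eq_transpose_comp_adjoint hdense hlinC hf hh hfT hT' hu hv⟩

lemma exists_linearization [CompleteSpace Y]
    (hdense : Dense (Submodule.span ℂ (δX '' ball (0 : X) 1) : Set G))
    (hlinC : ∀ g : X → ℂ, MemHL g → ∀ x ∈ ball (0 : X) 1, linC g (δX x) = g x)
    {f : X → Y} (hf : MemHL f)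
    {u : StrongDual ℂ Y →L[ℂ] StrongDual ℂ G} (hu : ∀ φ, u φ = linC (fun x => φ (f x))) :
    ∃ T : G →L[ℂ] Y, (∀ φ g, u φ g = φ (T g)) ∧ ∀ x ∈ ball (0 : X) 1, f x = T (δX x) := by
  have huδ : ∀ x ∈ ball (0 : X) 1, ∀ φ : StrongDual ℂ Y, u φ (δX x) = φ (f x) :=
    fun x hx φ => by rw [hu, hlinC _ (hf.clm_comp φ) x hx]
  obtain ⟨T, hT⟩ := exists_clm_dual_apply_eq_of_dense_span u hdense <| by
    rintro _ ⟨x, hx, rfl⟩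
    exact ⟨f x, huδ x hx⟩
  refine ⟨T, hT, fun x hx => (SeparatingDual.eq_iff_forall_dual_eq (R := ℂ)).2 fun φ => ?_⟩
  rw [← hT, huδ x hx]

end Linearization

theorem dual_ideal_eq_composition_ideal_general {X : Type u}
    [NormedAddCommGroup X] [NormedSpace ℂ X]
    (A : ∀ W Z : BanachSp.{u}, Set (W.carrier →L[ℂ] Z.carrier))
    (hA_comp : ∀ (U W Z V : BanachSp.{u}) (S : Z.carrier →L[ℂ] V.carrier)
      (T : W.carrier →L[ℂ] Z.carrier) (R : U.carrier →L[ℂ] W.carrier),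
      T ∈ A W Z → S.comp (T.comp R) ∈ A U V)
    (nA : ∀ W Z : BanachSp.{u}, (W.carrier →L[ℂ] Z.carrier) → ℝ)
    (hnA_nonneg : ∀ (W Z : BanachSp.{u}) (T : W.carrier →L[ℂ] Z.carrier), 0 ≤ nA W Z T)
    (hnA_comp : ∀ (U W Z V : BanachSp.{u}) (S : Z.carrier →L[ℂ] V.carrier)
      (T : W.carrier →L[ℂ] Z.carrier) (R : U.carrier →L[ℂ] W.carrier),
      T ∈ A W Z → nA U V (S.comp (T.comp R)) ≤ ‖S‖ * nA W Z T * ‖R‖)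
    (G Y : BanachSp.{u})
    (δX : X → G.carrier) (hδ : MemHL δX)
    (hdense : Dense (Submodule.span ℂ (δX '' ball (0 : X) 1) : Set G.carrier))
    (linC : (X → ℂ) → (G.carrier →L[ℂ] ℂ))
    (hlinC : ∀ g : X → ℂ, MemHL g → ∀ x ∈ ball (0 : X) 1, linC g (δX x) = g x)
    (hlinCnorm : ∀ g : X → ℂ, MemHL g → ‖linC g‖ = LipNorm g)
    (f : X → Y.carrier) (hf : MemHL f)
    (u : (Y.carrier →L[ℂ] ℂ) →L[ℂ] (G.carrier →L[ℂ] ℂ))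
    (hu : ∀ φ : Y.carrier →L[ℂ] ℂ, u φ = linC (fun x => φ (f x))) :
    (u ∈ A (dualSp Y) (dualSp G) ↔
      ∃ (Z : BanachSp.{u}) (T : Z.carrier →L[ℂ] Y.carrier)
        (T' : (Y.carrier →L[ℂ] ℂ) →L[ℂ] (Z.carrier →L[ℂ] ℂ)),
        (∀ (φ : Y.carrier →L[ℂ] ℂ) (z : Z.carrier), T' φ z = φ (T z)) ∧
        T' ∈ A (dualSp Y) (dualSp Z) ∧
        ∃ h : X → Z.carrier, MemHL h ∧ ∀ x ∈ ball (0 : X) 1, f x = T (h x)) ∧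
    (u ∈ A (dualSp Y) (dualSp G) →
      nA (dualSp Y) (dualSp G) u =
        sInf {r : ℝ | ∃ (Z : BanachSp.{u}) (T : Z.carrier →L[ℂ] Y.carrier)
          (T' : (Y.carrier →L[ℂ] ℂ) →L[ℂ] (Z.carrier →L[ℂ] ℂ)) (h : X → Z.carrier),
          (∀ (φ : Y.carrier →L[ℂ] ℂ) (z : Z.carrier), T' φ z = φ (T z)) ∧
          T' ∈ A (dualSp Y) (dualSp Z) ∧ MemHL h ∧
          (∀ x ∈ ball (0 : X) 1, f x = T (h x)) ∧
          r = nA (dualSp Y) (dualSp Z) T' * LipNorm h}) := by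
  obtain ⟨T, hT, hfT⟩ := exists_linearization hdense hlinC hf hu
  have hlower : ∀ (Z : BanachSp.{u}) (T₁ : Z.carrier →L[ℂ] Y.carrier)
      (T₁' : (Y.carrier →L[ℂ] ℂ) →L[ℂ] (Z.carrier →L[ℂ] ℂ)) (h₁ : X → Z.carrier),
      (∀ φ z, T₁' φ z = φ (T₁ z)) → T₁' ∈ A (dualSp Y) (dualSp Z) → MemHL h₁ →
      (∀ x ∈ ball (0 : X) 1, f x = T₁ (h₁ x)) →
      nA (dualSp Y) (dualSp G) u ≤ nA (dualSp Y) (dualSp Z) T₁' * LipNorm h₁ := by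
    intro Z T₁ T₁' h₁ hT₁ hA₁ hh₁ hfh₁
    obtain ⟨v, hv_norm, rfl⟩ :=
      exists_eq_transpose_comp_adjoint hdense hlinC hlinCnorm hf hh₁ hfh₁ hT₁ hu
    have hnA₁ := hnA_nonneg (dualSp Y) (dualSp Z) T₁'
    calc _ ≤ ‖v‖ * nA (dualSp Y) (dualSp Z) T₁' * ‖ContinuousLinearMap.id ℂ _‖ :=
          hnA_comp (dualSp Y) (dualSp Y) (dualSp Z) (dualSp G) v T₁' (.id ℂ _) hA₁
      _ ≤ LipNorm h₁ * nA (dualSp Y) (dualSp Z) T₁' * 1 := by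
        gcongr
        exacts [mul_nonneg (lipNorm_nonneg h₁) hnA₁, ContinuousLinearMap.norm_id_le]
      _ = _ := by ring
  refine ⟨⟨fun huA => ⟨G, T, u, hT, huA, δX, hδ, hfT⟩, ?_⟩, fun huA => ?_⟩
  · rintro ⟨Z, T₁, T₁', hT₁, hA₁, h₁, hh₁, hfh₁⟩
    obtain ⟨v, -, rfl⟩ :=
      exists_eq_transpose_comp_adjoint hdense hlinC hlinCnorm hf hh₁ hfh₁ hT₁ hu
    exact hA_comp (dualSp Y) (dualSp Y) (dualSp Z) (dualSp G) v T₁' (.id ℂ _) hA₁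
  · have hattained : nA (dualSp Y) (dualSp G) u * LipNorm δX = nA (dualSp Y) (dualSp G) u :=
      le_antisymm
        (mul_le_of_le_one_right (hnA_nonneg _ _ _) (lipNorm_le_one hdense hlinC hlinCnorm hδ))
        (hlower G T u δX hT huA hδ hfT)
    refine (IsLeast.csInf_eq ⟨?_, ?_⟩).symm
    · exact ⟨G, T, u, δX, hT, huA, hδ, hfT, hattained.symm⟩
    rintro r ⟨Z, T₁, T₁', h₁, hT₁, hA₁, hh₁, hfh₁, rfl⟩
    exact hlower Z T₁ T₁' h₁ hT₁ hA₁ hh₁ hfh₁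

/-- the holomorphic-Lipschitz dual ideal coincides isometrically with
the composition ideal 𝒜^{dual} ∘ HL₀.  Identifying HL₀(B_X) ≅ G₀(B_X)* via the
canonical isometric isomorphism Λ_X (hypothesized through linC), the transpose
f^t : Y* → HL₀(B_X) corresponds to the operator u : Y* → G₀(B_X)*,
u(y*) = T_{y* ∘ f}.  Then u ∈ 𝒜(Y*, G₀(B_X)*) iff f = T ∘ h for some Banach space
Z, T ∈ L(Z, Y) whose adjoint T* lies in 𝒜(Y*, Z*), and h ∈ HL₀(B_X, Z); and in
that case ‖f^t‖_𝒜 = inf ‖T*‖_𝒜 · L(h) over all such factorizations. -/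
theorem dual_ideal_eq_composition_ideal {X : Type u}
    [NormedAddCommGroup X] [NormedSpace ℂ X] [CompleteSpace X]
    (A : ∀ W Z : BanachSp.{u}, Set (W.carrier →L[ℂ] Z.carrier))
    (hA_comp : ∀ (U W Z V : BanachSp.{u}) (S : Z.carrier →L[ℂ] V.carrier)
      (T : W.carrier →L[ℂ] Z.carrier) (R : U.carrier →L[ℂ] W.carrier),
      T ∈ A W Z → S.comp (T.comp R) ∈ A U V)
    (hA_rank1 : ∀ (W Z : BanachSp.{u}) (φ : W.carrier →L[ℂ] ℂ) (z : Z.carrier),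
      φ.smulRight z ∈ A W Z)
    (s : ℝ) (hs0 : 0 < s) (hs1 : s ≤ 1)
    (nA : ∀ W Z : BanachSp.{u}, (W.carrier →L[ℂ] Z.carrier) → ℝ)
    (hnA_nonneg : ∀ (W Z : BanachSp.{u}) (T : W.carrier →L[ℂ] Z.carrier), 0 ≤ nA W Z T)
    (hnA_op : ∀ (W Z : BanachSp.{u}) (T : W.carrier →L[ℂ] Z.carrier), ‖T‖ ≤ nA W Z T)
    (hnA_tri : ∀ (W Z : BanachSp.{u}) (T T' : W.carrier →L[ℂ] Z.carrier),
      nA W Z (T + T') ^ s ≤ nA W Z T ^ s + nA W Z T' ^ s)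
    (hnA_comp : ∀ (U W Z V : BanachSp.{u}) (S : Z.carrier →L[ℂ] V.carrier)
      (T : W.carrier →L[ℂ] Z.carrier) (R : U.carrier →L[ℂ] W.carrier),
      T ∈ A W Z → nA U V (S.comp (T.comp R)) ≤ ‖S‖ * nA W Z T * ‖R‖)
    (G Y : BanachSp.{u})
    (δX : X → G.carrier) (hδ : MemHL δX)
    (hdense : Dense (Submodule.span ℂ (δX '' ball (0 : X) 1) : Set G.carrier))
    (linC : (X → ℂ) → (G.carrier →L[ℂ] ℂ))
    (hlinC : ∀ g : X → ℂ, MemHL g → ∀ x ∈ ball (0 : X) 1, linC g (δX x) = g x)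
    (hlinCnorm : ∀ g : X → ℂ, MemHL g → ‖linC g‖ = LipNorm g)
    (f : X → Y.carrier) (hf : MemHL f)
    (u : (Y.carrier →L[ℂ] ℂ) →L[ℂ] (G.carrier →L[ℂ] ℂ))
    (hu : ∀ φ : Y.carrier →L[ℂ] ℂ, u φ = linC (fun x => φ (f x))) :
    (u ∈ A (dualSp Y) (dualSp G) ↔
      ∃ (Z : BanachSp.{u}) (T : Z.carrier →L[ℂ] Y.carrier)
        (T' : (Y.carrier →L[ℂ] ℂ) →L[ℂ] (Z.carrier →L[ℂ] ℂ)),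
        (∀ (φ : Y.carrier →L[ℂ] ℂ) (z : Z.carrier), T' φ z = φ (T z)) ∧
        T' ∈ A (dualSp Y) (dualSp Z) ∧
        ∃ h : X → Z.carrier, MemHL h ∧ ∀ x ∈ ball (0 : X) 1, f x = T (h x)) ∧
    (u ∈ A (dualSp Y) (dualSp G) →
      nA (dualSp Y) (dualSp G) u =
        sInf {r : ℝ | ∃ (Z : BanachSp.{u}) (T : Z.carrier →L[ℂ] Y.carrier)
          (T' : (Y.carrier →L[ℂ] ℂ) →L[ℂ] (Z.carrier →L[ℂ] ℂ)) (h : X → Z.carrier),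
          (∀ (φ : Y.carrier →L[ℂ] ℂ) (z : Z.carrier), T' φ z = φ (T z)) ∧
          T' ∈ A (dualSp Y) (dualSp Z) ∧ MemHL h ∧
          (∀ x ∈ ball (0 : X) 1, f x = T (h x)) ∧
          r = nA (dualSp Y) (dualSp Z) T' * LipNorm h}) :=
  dual_ideal_eq_composition_ideal_general A hA_comp nA hnA_nonneg hnA_comp G Y δX hδ hdense linC
    hlinC hlinCnorm f hf u hu
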